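/- Let G be a group, S a finite symmetric generating set, π : G → G̃ a quotient with injectivity radius at least 2E with respect to S. If F' ⊆ G is the set of elements g in the ball of radius E around the identity with π(g) ∈ F̃ for some subgroup F̃ of G̃ contained in the ball of radius E of G̃, and π restricts to a bijection from F' to F̃, then F' is closed under multiplication and inversion, i.e., F' is a subgroup of G. -/
import Mathlib


/-- `inBall S r g` means `g` lies in the ball of radius `r` around the identity in
the word metric on the group generated by `S` (letters from `S ∪ S⁻¹`). -/
def inBall {G : Type*} [Group G] (S : Set G) (r : ℕ) (g : G) : Prop :=
  ∃ l : List G, (∀ x ∈ l, x ∈ S ∨ x⁻¹ ∈ S) ∧ l.length ≤ r ∧ l.prod = g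

lemma inBall.one {G : Type*} [Group G] (S : Set G) (r : ℕ) : inBall S r 1 :=
  ⟨[], by simp, by simp, by simp⟩

lemma inBall.mul {G : Type*} [Group G] {S : Set G} {r s : ℕ} {g h : G}
    (hg : inBall S r g) (hh : inBall S s h) : inBall S (r + s) (g * h) := by
  obtain ⟨l1, h1, h1l, h1p⟩ := hg
  obtain ⟨l2, h2, h2l, h2p⟩ := hh
  refine ⟨l1 ++ l2, ?_, by simpa using Nat.add_le_add h1l h2l, by simp [h1p, h2p]⟩
  intro x hx
  rcases List.mem_append.1 hx with hx | hx
  exacts [h1 x hx, h2 x hx]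

lemma inBall.inv {G : Type*} [Group G] {S : Set G} {r : ℕ} {g : G}
    (hg : inBall S r g) : inBall S r g⁻¹ := by
  obtain ⟨l, hl, hll, hlp⟩ := hg
  refine ⟨(l.map (·⁻¹)).reverse, ?_, by simpa using hll, ?_⟩
  · intro x hx
    simp only [List.mem_reverse, List.mem_map] at hx
    obtain ⟨y, hy, rfl⟩ := hx
    rcases hl y hy with h | h
    · exact Or.inr (by simpa using h)
    · exact Or.inl h
  · rw [List.prod_reverse_noncomm, ← hlp]
    simp

lemma inBall.mono {G : Type*} [Group G] {S : Set G} {r s : ℕ} {g : G}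
    (hg : inBall S r g) (hrs : r ≤ s) : inBall S s g := by
  obtain ⟨l, hl, hll, hlp⟩ := hg
  exact ⟨l, hl, hll.trans hrs, hlp⟩

/-- Let `π : G → G̃` have injectivity radius at least `2E` with respect to a finite
symmetric generating set `S`. If `F̃ ≤ G̃` lies in the ball of radius `E` of `G̃`,
`F'` is the set of elements of the ball of radius `E` of `G` mapping into `F̃`, and
`π` restricts to a bijection `F' → F̃`, then `F'` is closed under multiplication and
inversion, i.e. `F'` is a subgroup of `G`. -/
theorem preimage_set_is_subgroup {G Q : Type*} [Group G] [Group Q]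
    (S : Finset G) (hgen : Subgroup.closure (S : Set G) = ⊤)
    (hsymm : ∀ s ∈ S, s⁻¹ ∈ (S : Set G))
    (π : G →* Q) (E : ℕ)
    (hinj : ∀ g h : G, inBall (S : Set G) (2 * E) g → inBall (S : Set G) (2 * E) h →
      π g = π h → g = h)
    (Ftilde : Subgroup Q) (hFt : ∀ q ∈ Ftilde, inBall (π '' (S : Set G)) E q)
    (F' : Set G) (hF' : F' = {g : G | inBall (S : Set G) E g ∧ π g ∈ Ftilde})
    (hbij : Set.BijOn π F' (Ftilde : Set Q)) :
    ∃ H : Subgroup G, (H : Set G) = F' := by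
  subst hF'
  have hmul : ∀ f g : G, f ∈ {g : G | inBall (S : Set G) E g ∧ π g ∈ Ftilde} →
      g ∈ {g : G | inBall (S : Set G) E g ∧ π g ∈ Ftilde} →
      f * g ∈ {g : G | inBall (S : Set G) E g ∧ π g ∈ Ftilde} := by
    intro f g hf hg
    obtain ⟨hfB, hfF⟩ := hf
    obtain ⟨hgB, hgF⟩ := hg
    have hfg : π (f * g) ∈ Ftilde := by rw [map_mul]; exact mul_mem hfF hgF
    obtain ⟨h, hh, hπh⟩ := hbij.surjOn hfg
    have hball : inBall (S : Set G) (2 * E) (f * g) := by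
      have := hfB.mul hgB; rwa [two_mul]
    have hhball : inBall (S : Set G) (2 * E) h :=
      hh.1.mono (by omega)
    have : h = f * g := hinj h (f * g) hhball hball hπh
    rwa [← this]
  set F : Set G := {g : G | inBall (S : Set G) E g ∧ π g ∈ Ftilde} with hFdef
  have hone : (1 : G) ∈ F := ⟨inBall.one _ _, by rw [map_one]; exact one_mem _⟩
  have hmul' : ∀ {a b : G}, a ∈ F → b ∈ F → a * b ∈ F := fun ha hb => hmul _ _ ha hb
  have hinv' : ∀ {a : G}, a ∈ F → a⁻¹ ∈ F := fun ha =>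
    ⟨ha.1.inv, by rw [map_inv]; exact inv_mem ha.2⟩
  exact ⟨{ carrier := F, one_mem' := hone, mul_mem' := hmul', inv_mem' := hinv' }, rfl⟩
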